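/- Let S be a right π-inverse ordered semigroup in which L* ⊆ R*. Then S is left weakly commutative: for every a, b ∈ S there exist n ∈ ℕ and t ∈ S such that (ab)^n ≤ b t. -/
import Mathlib


/-!  Common framework: an ordered semigroup is a semigroup with a partial
order compatible with multiplication on both sides.  `pw a n` denotes the
power `a^(n+1)` (so the index `n : ℕ` ranges over the positive exponents). -/

variable {S : Type*}

/-- `pw a n = a^(n+1)`. -/
def pw [Semigroup S] (a : S) : ℕ → S
  | 0 => a
  | n + 1 => pw a n * a

section Defs
variable [Semigroup S] [PartialOrder S]

/-- ordered idempotent : `e ≤ e²`. -/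
def OrdIdem (e : S) : Prop := e ≤ e * e

/-- `b` is an ordered inverse of `a` : `a ≤ aba` and `b ≤ bab`. -/
def OrdInv (a b : S) : Prop := a ≤ a * b * a ∧ b ≤ b * a * b

/-- regular element : `a ∈ (aSa]`. -/
def Regular (a : S) : Prop := ∃ x : S, a ≤ a * x * a

/-- π-regular : every element has a regular (positive) power. -/
def PiRegular (S : Type*) [Semigroup S] [PartialOrder S] : Prop :=
  ∀ a : S, ∃ m : ℕ, Regular (pw a m)

/-- principal left ideal `(a ∪ Sa]`. -/
def Lset (a : S) : Set S := {x | x ≤ a ∨ ∃ s : S, x ≤ s * a}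

/-- principal right ideal `(a ∪ aS]`. -/
def Rset (a : S) : Set S := {x | x ≤ a ∨ ∃ s : S, x ≤ a * s}

/-- Green's relation `L`. -/
def GreenL (a b : S) : Prop := Lset a = Lset b

/-- Green's relation `R`. -/
def GreenR (a b : S) : Prop := Rset a = Rset b

/-- `m` is the least index (i.e. `m+1` is the least positive exponent) with `a^(m+1)` regular. -/
def LeastReg (a : S) (m : ℕ) : Prop := Regular (pw a m) ∧ ∀ k < m, ¬ Regular (pw a k)

/-- generalized Green relation `L*`. -/
def GreenLStar (a b : S) : Prop :=
  ∃ m n : ℕ, LeastReg a m ∧ LeastReg b n ∧ GreenL (pw a m) (pw b n)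

/-- generalized Green relation `R*`. -/
def GreenRStar (a b : S) : Prop :=
  ∃ m n : ℕ, LeastReg a m ∧ LeastReg b n ∧ GreenR (pw a m) (pw b n)

end Defs

/-- auxiliary: `hb a b m = b * (ab)^m` (so that `a * hb a b m = (ab)^(m+1)`). -/
def hb [Semigroup S] (a b : S) : ℕ → S
  | 0 => b
  | m + 1 => hb a b m * (a * b)

lemma a_mul_hb [Semigroup S] (a b : S) : ∀ m, a * hb a b m = pw (a * b) m
  | 0 => rfl
  | m + 1 => by
      show a * (hb a b m * (a * b)) = pw (a * b) m * (a * b)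
      rw [← mul_assoc, a_mul_hb a b m]

lemma hb_form [Semigroup S] (a b : S) : ∀ m, hb a b m = b ∨ ∃ c, hb a b m = b * c
  | 0 => Or.inl rfl
  | m + 1 => by
      rcases hb_form a b m with h | ⟨c, h⟩
      · exact Or.inr ⟨a * b, by show hb a b m * (a * b) = _; rw [h]⟩
      · exact Or.inr ⟨c * (a * b), by show hb a b m * (a * b) = _; rw [h, mul_assoc]⟩

lemma Lset_mono [Semigroup S] [PartialOrder S] [CovariantClass S S (· * ·) (· ≤ ·)]
    {p r s : S} (hp : p ≤ s * r) : Lset p ⊆ Lset r := by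
  rintro y (hy | ⟨t, hy⟩)
  · exact Or.inr ⟨s, hy.trans hp⟩
  · exact Or.inr ⟨t * s, by rw [mul_assoc]; exact hy.trans (mul_le_mul_right hp t)⟩

lemma leastReg_unique [Semigroup S] [PartialOrder S] {a : S} {m n : ℕ}
    (h1 : LeastReg a m) (h2 : LeastReg a n) : m = n := by
  rcases lt_trichotomy m n with h | h | h
  · exact absurd h1.1 (h2.2 m h)
  · exact h
  · exact absurd h2.1 (h1.2 n h)

theorem stmt14 [Semigroup S] [PartialOrder S] [CovariantClass S S (· * ·) (· ≤ ·)]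
    [CovariantClass S S (Function.swap (· * ·)) (· ≤ ·)]
    (hpi : PiRegular S)
    (hrinv : ∀ e f : S, OrdIdem e → OrdIdem f → GreenLStar e f → GreenRStar e f)
    (hlr : ∀ a b : S, GreenLStar a b → GreenRStar a b) :
    ∀ a b : S, ∃ (n : ℕ) (t : S), pw (a * b) n ≤ b * t := by
  classical
  intro a b
  have hex : ∃ m, Regular (pw (a * b) m) := hpi (a * b)
  set M := Nat.find hex with hMdef
  have hMreg : Regular (pw (a * b) M) := Nat.find_spec hex
  have hMleast : LeastReg (a * b) M := ⟨hMreg, fun k hk => Nat.find_min hex hk⟩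
  obtain ⟨x0, hx0⟩ := hMreg
  set w := pw (a * b) M with hwdef
  set x := x0 * w * x0 with hxdef
  -- w ≤ w x w
  have hwx : w ≤ w * x * w := by
    calc w ≤ w * x0 * w := hx0
      _ ≤ w * x0 * (w * x0 * w) := mul_le_mul_right hx0 _
      _ = w * x * w := by rw [hxdef]; simp [mul_assoc]
  -- x ≤ x w x
  have hxw : x ≤ x * w * x := by
    have s1 : x ≤ x * w * x0 := by
      calc x = x0 * w * x0 := hxdef
        _ ≤ x0 * (w * x0 * w) * x0 :=
          mul_le_mul_left (mul_le_mul_right hx0 x0) x0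
        _ = x * w * x0 := by rw [hxdef]; simp [mul_assoc]
    calc x ≤ x * w * x0 := s1
      _ ≤ x * (w * x0 * w) * x0 := mul_le_mul_left (mul_le_mul_right hx0 x) x0
      _ = x * w * x := by rw [hxdef]; simp [mul_assoc]
  set h := hb a b M with hhdef
  have hah : a * h = w := by rw [hhdef, hwdef]; exact a_mul_hb a b M
  set q := h * x * a with hqdef
  -- q is an ordered idempotent
  have hq : q ≤ q * q := by
    calc q = h * x * a := hqdef
      _ ≤ h * (x * w * x) * a := mul_le_mul_left (mul_le_mul_right hxw h) a
      _ = q * q := by rw [hqdef, ← hah]; simp [mul_assoc]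
  have hq3 : q ≤ q * (q * q) := hq.trans (mul_le_mul_right hq q)
  set v := q * h with hvdef
  -- v is regular
  have hvreg : v ≤ v * (x * a) * v := by
    calc v = q * h := hvdef
      _ ≤ (q * (q * q)) * h := mul_le_mul_left hq3 h
      _ = v * (x * a) * v := by rw [hvdef, hqdef]; simp [mul_assoc]
  have hv0 : LeastReg v 0 := ⟨⟨x * a, hvreg⟩, fun k hk => absurd hk (Nat.not_lt_zero k)⟩
  -- GreenL w v
  have hvw : v ≤ (h * x) * w := by
    rw [hvdef, hqdef, ← hah]; simp [mul_assoc]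
  have hwv : w ≤ (w * x * a) * v := by
    calc w ≤ w * x * w := hwx
      _ ≤ w * x * (w * x * w) := mul_le_mul_right hwx _
      _ = (w * x * a) * v := by rw [hvdef, hqdef, ← hah]; simp [mul_assoc]
  have hGL : GreenL (pw (a * b) M) (pw v 0) := by
    show Lset w = Lset v
    exact le_antisymm (Lset_mono hwv) (Lset_mono hvw)
  obtain ⟨m, n, hm, hn, hGR⟩ := hlr (a * b) v ⟨M, 0, hMleast, hv0, hGL⟩
  have hmM : m = M := leastReg_unique hm hMleast
  have hn0 : n = 0 := leastReg_unique hn hv0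
  subst hmM; subst hn0
  have hwin : w ∈ Rset w := Or.inl le_rfl
  rw [show Rset w = Rset (pw v 0) from hGR] at hwin
  -- v = b * r for some r
  have hvb : ∃ r, v = b * r := by
    have hv' : v = h * (x * a * h) := by rw [hvdef, hqdef]; simp [mul_assoc]
    rcases hb_form a b M with h1 | ⟨c, hc⟩
    · exact ⟨x * a * h, by rw [hv', show h = b from h1]⟩
    · exact ⟨c * (x * a * h), by rw [hv', show h = b * c from hc, mul_assoc]⟩
  obtain ⟨r, hr⟩ := hvb
  rcases hwin with h1 | ⟨s, h1⟩
  · exact ⟨M, r, by rw [← hr]; exact h1⟩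
  · exact ⟨M, r * s, by rw [← mul_assoc, ← hr]; exact h1⟩
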